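/- Let 0 < α < 1/M, β > 0 and d ∈ ℝ^N with d_m > 0 for all m. Then the map x ↦ F(x) − β d has a unique fixed point x̂^∞ ∈ ℝ^N, and for every initial value x̂_0 ∈ ℝ^N the sequence defined by x̂_i = F(x̂_{i−1}) − β d converges to x̂^∞ as i → ∞. -/

import Mathlib

/-- The αβ-HMM log-belief-ratio mapping `F`, defined componentwise for `m = 1, …, M-1` by
`F_m(x) = log(((1 - αM)·exp(x_m) + α + α·Σ_n exp(x_n)) / (1 - αM + α + α·Σ_n exp(x_n)))`. -/
noncomputable def abHMM.F (α : ℝ) (M : ℕ) (x : Fin (M - 1) → ℝ) : Fin (M - 1) → ℝ :=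
  fun m => Real.log (((1 - α * M) * Real.exp (x m) + α + α * ∑ n, Real.exp (x n)) /
    (1 - α * M + α + α * ∑ n, Real.exp (x n)))

/-! In the coordinates `w = (1, exp x)` the map `x ↦ F x - β d` is the action on rays of the
positive matrix `diag (1, exp (-β d)) · ((1 - αM) I + α J)`, `J` the all-ones matrix. If the ratios
of two positive vectors lie in `[a, ρ a]`, the ratios of their images are means of the old ratios
and of the ratio of the sums, with weight at least `α / (1 - αM + α)` on the latter; so `ρ - 1`
contracts by `q = (1 - αM) / (1 - αM + α) < 1`. Any two trajectories therefore approach each other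
geometrically: one orbit is Cauchy, its limit is a fixed point, and every trajectory tends to it. -/

open Finset Filter Function Topology

theorem exists_isFixedPt_tendsto_iterate_of_dist_iterate_le {X : Type*} [MetricSpace X]
    [CompleteSpace X] [Nonempty X] {f : X → X} (hf : Continuous f) {q : ℝ} (hq₀ : 0 ≤ q)
    (hq₁ : q < 1) (h : ∀ x y, ∃ C, ∀ n, dist (f^[n] x) (f^[n] y) ≤ C * q ^ n) :
    ∃ z, IsFixedPt f z ∧ ∀ x, Tendsto (fun n => f^[n] x) atTop (𝓝 z) := by
  obtain ⟨x₀⟩ := ‹Nonempty X›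
  obtain ⟨C₀, hC₀⟩ := h x₀ (f x₀)
  have hcauchy : CauchySeq fun n => f^[n] x₀ :=
    cauchySeq_of_le_geometric q C₀ hq₁ fun n => by simpa only [iterate_succ_apply] using hC₀ n
  obtain ⟨z, hz⟩ := cauchySeq_tendsto_of_complete hcauchy
  have hfix : IsFixedPt f z := isFixedPt_of_tendsto_iterate hz hf.continuousAt
  refine ⟨z, hfix, fun x => ?_⟩
  obtain ⟨C, hC⟩ := h x z
  have hgeom : Tendsto (fun n => C * q ^ n) atTop (𝓝 0) := by
    simpa using (tendsto_pow_atTop_nhds_zero_of_lt_one hq₀ hq₁).const_mul C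
  rw [tendsto_iff_dist_tendsto_zero]
  exact squeeze_zero (fun _ => dist_nonneg) (fun n => iterate_fixed hfix n ▸ hC n) hgeom

section RatioSpread

variable {ι : Type*} {ρ c α : ℝ} {v w : ι → ℝ}

/-- For positive vectors: Hilbert's projective distance between `v` and `w` is at most `log ρ`. -/
def RatioSpreadLE (ρ : ℝ) (v w : ι → ℝ) : Prop :=
  ∃ a > 0, ∀ o, a * v o ≤ w o ∧ w o ≤ ρ * a * v o

theorem RatioSpreadLE.one_le [Nonempty ι] (h : RatioSpreadLE ρ v w) (hv : ∀ o, 0 < v o) :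
    1 ≤ ρ := by
  obtain ⟨a, ha, hb⟩ := h
  obtain ⟨o⟩ := ‹Nonempty ι›
  have := (hb o).1.trans (hb o).2
  exact le_of_mul_le_mul_right (by linarith : 1 * (a * v o) ≤ ρ * (a * v o))
    (mul_pos ha (hv o))

theorem RatioSpreadLE.smul (h : RatioSpreadLE ρ v w) {s t : ℝ} (hs : 0 < s) (ht : 0 < t) :
    RatioSpreadLE ρ (s • v) (t • w) := by
  obtain ⟨a, ha, hb⟩ := h
  refine ⟨a * t / s, by positivity, fun o => ⟨?_, ?_⟩⟩ <;>
    simp only [Pi.smul_apply, smul_eq_mul]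
  · calc a * t / s * (s * v o) = t * (a * v o) := by field_simp
      _ ≤ t * w o := mul_le_mul_of_nonneg_left (hb o).1 ht.le
  · calc t * w o ≤ t * (ρ * a * v o) := mul_le_mul_of_nonneg_left (hb o).2 ht.le
      _ = ρ * (a * t / s) * (s * v o) := by field_simp

theorem RatioSpreadLE.mul_left (h : RatioSpreadLE ρ v w) {g : ι → ℝ} (hg : ∀ o, 0 ≤ g o) :
    RatioSpreadLE ρ (g * v) (g * w) := by
  obtain ⟨a, ha, hb⟩ := h
  refine ⟨a, ha, fun o => ⟨?_, ?_⟩⟩ <;> simp only [Pi.mul_apply]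
  · nlinarith [mul_le_mul_of_nonneg_left (hb o).1 (hg o)]
  · nlinarith [mul_le_mul_of_nonneg_left (hb o).2 (hg o)]

theorem RatioSpreadLE.log_div_sub_log_div_le (h : RatioSpreadLE ρ v w) (hv : ∀ o, 0 < v o)
    (i j : ι) : Real.log (w i / w j) - Real.log (v i / v j) ≤ ρ - 1 := by
  obtain ⟨a, ha, hb⟩ := h
  have hw : ∀ o, 0 < w o := fun o => (mul_pos ha (hv o)).trans_le (hb o).1
  have hρv : 0 ≤ ρ * v i := by nlinarith [(hw i).trans_le (hb i).2]
  have hcross : w i * v j ≤ ρ * (w j * v i) :=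
    calc w i * v j ≤ ρ * a * v i * v j := mul_le_mul_of_nonneg_right (hb i).2 (hv j).le
      _ = ρ * v i * (a * v j) := by ring
      _ ≤ ρ * v i * w j := mul_le_mul_of_nonneg_left (hb j).1 hρv
      _ = ρ * (w j * v i) := by ring
  rw [← Real.log_div (div_pos (hw i) (hw j)).ne' (div_pos (hv i) (hv j)).ne', div_div_div_eq]
  refine (Real.log_le_sub_one_of_pos (div_pos (mul_pos (hw i) (hv j))
    (mul_pos (hw j) (hv i)))).trans ?_
  rw [sub_le_sub_iff_right, div_le_iff₀ (mul_pos (hw j) (hv i))]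
  exact hcross

variable [Fintype ι]

theorem exists_ratioSpreadLE (hv : ∀ o, 0 < v o) (hw : ∀ o, 0 < w o) :
    ∃ ρ, RatioSpreadLE ρ v w := by
  set S := ∑ o, v o / w o
  set T := ∑ o, w o / v o
  have hS : ∀ o, v o / w o ≤ 1 + S := fun o => by
    have := single_le_sum (f := fun o => v o / w o) (fun o _ => (div_pos (hv o) (hw o)).le)
      (mem_univ o)
    linarith
  have hT : ∀ o, w o / v o ≤ 1 + T := fun o => by
    have := single_le_sum (f := fun o => w o / v o) (fun o _ => (div_pos (hw o) (hv o)).le)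
      (mem_univ o)
    linarith
  have hS₀ : 0 < 1 + S := by
    have : 0 ≤ S := sum_nonneg fun o _ => (div_pos (hv o) (hw o)).le
    linarith
  refine ⟨(1 + T) * (1 + S), (1 + S)⁻¹, inv_pos.2 hS₀, fun o => ⟨?_, ?_⟩⟩
  · rw [inv_mul_le_iff₀ hS₀, ← div_le_iff₀ (hw o)]
    exact hS o
  · rw [show (1 + T) * (1 + S) * (1 + S)⁻¹ * v o = (1 + T) * v o by field_simp,
      ← div_le_iff₀ (hv o)]
    exact hT o

def mixSum (c α : ℝ) (w : ι → ℝ) : ι → ℝ := fun o => c * w o + α * ∑ o', w o'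

theorem mixSum_pos [Nonempty ι] (hc : 0 ≤ c) (hα : 0 < α) (hw : ∀ o, 0 < w o) (o : ι) :
    0 < mixSum c α w o :=
  add_pos_of_nonneg_of_pos (mul_nonneg hc (hw o).le)
    (mul_pos hα (sum_pos (fun o _ => hw o) univ_nonempty))

theorem continuous_mixSum : Continuous (mixSum c α : (ι → ℝ) → ι → ℝ) :=
  continuous_pi fun o => by unfold mixSum; fun_prop

-- `mixSum c α w o / mixSum c α v o` is a weighted mean of `w o / v o` and `σ = ∑ w / ∑ v`,
-- with weight at least `α / (c + α)` on `σ`.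
theorem mixSum_ratio_bounds {a b σ : ℝ} (hc : 0 ≤ c) (hα : 0 < α) (hv : ∀ o, 0 < v o)
    (hab : ∀ o, a * v o ≤ w o ∧ w o ≤ b * v o) (hσ : ∑ o, w o = σ * ∑ o, v o)
    (hσa : a ≤ σ) (hσb : σ ≤ b) (o : ι) :
    (α * σ + c * a) * mixSum c α v o ≤ (c + α) * mixSum c α w o ∧
      (c + α) * mixSum c α w o ≤ (α * σ + c * b) * mixSum c α v o := by
  have hvS : v o ≤ ∑ o, v o := single_le_sum (fun o _ => (hv o).le) (mem_univ o)
  have hcα : 0 ≤ c + α := by linarith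
  simp only [mixSum, hσ]
  constructor
  · nlinarith [mul_nonneg (mul_nonneg hc hcα) (by linarith [(hab o).1] : 0 ≤ w o - a * v o),
      mul_nonneg (mul_nonneg (mul_nonneg hc hα.le) (sub_nonneg.2 hσa)) (sub_nonneg.2 hvS)]
  · nlinarith [mul_nonneg (mul_nonneg hc hcα) (by linarith [(hab o).2] : 0 ≤ b * v o - w o),
      mul_nonneg (mul_nonneg (mul_nonneg hc hα.le) (sub_nonneg.2 hσb)) (sub_nonneg.2 hvS)]

theorem RatioSpreadLE.mixSum [Nonempty ι] (hc : 0 ≤ c) (hα : 0 < α) (hv : ∀ o, 0 < v o)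
    (h : RatioSpreadLE ρ v w) :
    RatioSpreadLE ((c * ρ + α) / (c + α)) (mixSum c α v) (mixSum c α w) := by
  have hρ := h.one_le hv
  obtain ⟨a, ha, hb⟩ := h
  have hS : 0 < ∑ o, v o := sum_pos (fun o _ => hv o) univ_nonempty
  obtain ⟨σ, hσ⟩ : ∃ σ, ∑ o, w o = σ * ∑ o, v o :=
    ⟨(∑ o, w o) / ∑ o, v o, (div_mul_cancel₀ _ hS.ne').symm⟩
  have hσa : a ≤ σ := le_of_mul_le_mul_right (by
    rw [← hσ, mul_sum]; exact sum_le_sum fun o _ => (hb o).1) hS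
  have hσb : σ ≤ ρ * a := le_of_mul_le_mul_right (by
    rw [← hσ, mul_sum]; exact sum_le_sum fun o _ => by linarith [(hb o).2]) hS
  have hcα : 0 < c + α := by linarith
  have ha' : 0 < (α * σ + c * a) / (c + α) :=
    div_pos (add_pos_of_pos_of_nonneg (mul_pos hα (ha.trans_le hσa)) (mul_nonneg hc ha.le)) hcα
  have hspread : (α * σ + c * (ρ * a)) / (c + α) ≤
      (c * ρ + α) / (c + α) * ((α * σ + c * a) / (c + α)) := by
    rw [div_mul_div_comm, div_le_div_iff₀ hcα (mul_pos hcα hcα)]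
    nlinarith [mul_nonneg (mul_nonneg (mul_nonneg (mul_nonneg hc hα.le) (sub_nonneg.2 hρ))
      (sub_nonneg.2 hσa)) hcα.le]
  refine ⟨_, ha', fun o => ?_⟩
  have hmean := mixSum_ratio_bounds hc hα hv (fun o => ⟨(hb o).1, mul_assoc ρ a (v o) ▸ (hb o).2⟩)
    hσ hσa hσb o
  constructor
  · rw [div_mul_eq_mul_div, div_le_iff₀ hcα, mul_comm _ (c + α)]
    exact hmean.1
  · calc _root_.mixSum c α w o ≤ (α * σ + c * (ρ * a)) / (c + α) * _root_.mixSum c α v o := by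
          rw [div_mul_eq_mul_div, le_div_iff₀ hcα, mul_comm]; exact hmean.2
      _ ≤ _ := mul_le_mul_of_nonneg_right hspread (mixSum_pos hc hα hv o).le

end RatioSpread

section LogChart

variable {ι : Type*} {c α ρ : ℝ}

-- `none` is the reference coordinate against which the log-ratios `x` are taken.
noncomputable def expLift (x : ι → ℝ) : Option ι → ℝ :=
  fun o => o.elim 1 fun m => Real.exp (x m)

noncomputable def logRatio (w : Option ι → ℝ) : ι → ℝ :=
  fun m => Real.log (w (some m) / w none)

theorem expLift_pos (x : ι → ℝ) (o : Option ι) : 0 < expLift x o := by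
  cases o <;> simp [expLift, Real.exp_pos]

theorem continuous_expLift : Continuous (expLift : (ι → ℝ) → Option ι → ℝ) :=
  continuous_pi fun o => by
    cases o
    exacts [continuous_const, (continuous_apply _).rexp]

theorem logRatio_expLift (x : ι → ℝ) : logRatio (expLift x) = x := by
  ext m
  simp [logRatio, expLift]

theorem expLift_logRatio {w : Option ι → ℝ} (hw : ∀ o, 0 < w o) :
    expLift (logRatio w) = (w none)⁻¹ • w := by
  ext (_ | m)
  · simp [expLift, (hw none).ne']
  · simp only [expLift, logRatio, Option.elim, Pi.smul_apply, smul_eq_mul]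
    rw [Real.exp_log (div_pos (hw _) (hw none)), div_eq_inv_mul]

theorem logRatio_mul {v w : Option ι → ℝ} (hv : ∀ o, 0 < v o) (hw : ∀ o, 0 < w o) :
    logRatio (v * w) = logRatio v + logRatio w := by
  ext m
  simp only [logRatio, Pi.mul_apply, Pi.add_apply]
  rw [mul_div_mul_comm,
    Real.log_mul (div_pos (hv _) (hv none)).ne' (div_pos (hw _) (hw none)).ne']

theorem Continuous.logRatio {X : Type*} [TopologicalSpace X] {φ : X → Option ι → ℝ}
    (hφ : Continuous φ) (hpos : ∀ x o, 0 < φ x o) : Continuous fun x => _root_.logRatio (φ x) :=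
  continuous_pi fun m =>
    (((continuous_apply (some m)).comp hφ).div ((continuous_apply none).comp hφ)
      fun x => (hpos x none).ne').log fun x => (div_pos (hpos x _) (hpos x none)).ne'

variable [Fintype ι]

theorem RatioSpreadLE.dist_logRatio_le {v w : Option ι → ℝ} (h : RatioSpreadLE ρ v w)
    (hv : ∀ o, 0 < v o) : dist (logRatio w) (logRatio v) ≤ ρ - 1 := by
  refine (dist_pi_le_iff (sub_nonneg.2 (h.one_le hv))).2 fun m => ?_
  rw [Real.dist_eq, abs_sub_le_iff]
  refine ⟨h.log_div_sub_log_div_le hv (some m) none, ?_⟩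
  have := h.log_div_sub_log_div_le hv none (some m)
  rw [← inv_div (w (some m)), Real.log_inv, ← inv_div (v (some m)), Real.log_inv] at this
  simp only [logRatio]
  linarith

/-- Action of the positive matrix `diag g · mixSum c α` on the rays of the positive cone, read in
the chart `expLift`. -/
noncomputable def projAction (g : Option ι → ℝ) (c α : ℝ) (x : ι → ℝ) : ι → ℝ :=
  logRatio (g * mixSum c α (expLift x))

variable {g : Option ι → ℝ} (hg : ∀ o, 0 < g o) (hc : 0 ≤ c) (hα : 0 < α)
include hg hc hα

theorem mul_mixSum_expLift_pos (x : ι → ℝ) (o : Option ι) :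
    0 < (g * mixSum c α (expLift x)) o :=
  mul_pos (hg o) (mixSum_pos hc hα (expLift_pos x) o)

theorem continuous_projAction : Continuous (projAction g c α) :=
  (continuous_const.mul (continuous_mixSum.comp continuous_expLift)).logRatio
    (mul_mixSum_expLift_pos hg hc hα)

theorem RatioSpreadLE.expLift_projAction {x y : ι → ℝ}
    (h : RatioSpreadLE ρ (expLift y) (expLift x)) :
    RatioSpreadLE ((c * ρ + α) / (c + α)) (expLift (projAction g c α y))
      (expLift (projAction g c α x)) := by
  rw [projAction, projAction, expLift_logRatio (mul_mixSum_expLift_pos hg hc hα y),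
    expLift_logRatio (mul_mixSum_expLift_pos hg hc hα x)]
  exact ((h.mixSum hc hα (expLift_pos y)).mul_left fun o => (hg o).le).smul
    (inv_pos.2 (mul_mixSum_expLift_pos hg hc hα y none))
    (inv_pos.2 (mul_mixSum_expLift_pos hg hc hα x none))

theorem exists_dist_iterate_projAction_le (x y : ι → ℝ) :
    ∃ C, ∀ n, dist ((projAction g c α)^[n] x) ((projAction g c α)^[n] y) ≤
      C * (c / (c + α)) ^ n := by
  obtain ⟨ρ, hρ⟩ := exists_ratioSpreadLE (expLift_pos y) (expLift_pos x)
  have hfactor : ∀ r, (c * r + α) / (c + α) = 1 + (r - 1) * (c / (c + α)) := fun r => by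
    have : c + α ≠ 0 := by linarith
    field_simp
    ring
  have hspread : ∀ n, RatioSpreadLE (1 + (ρ - 1) * (c / (c + α)) ^ n)
      (expLift ((projAction g c α)^[n] y)) (expLift ((projAction g c α)^[n] x)) := by
    intro n
    induction n with
    | zero => simpa using hρ
    | succ n ih =>
      rw [iterate_succ_apply', iterate_succ_apply']
      convert ih.expLift_projAction hg hc hα using 1
      rw [hfactor]
      ring
  refine ⟨ρ - 1, fun n => ?_⟩
  have := (hspread n).dist_logRatio_le (expLift_pos _)
  rwa [logRatio_expLift, logRatio_expLift, add_sub_cancel_left] at this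

end LogChart

theorem abHMM.F_eq_logRatio_mixSum (α : ℝ) (M : ℕ) (x : Fin (M - 1) → ℝ) :
    abHMM.F α M x = logRatio (mixSum (1 - α * M) α (expLift x)) := by
  ext m
  simp only [abHMM.F, logRatio, mixSum, expLift, Fintype.sum_option, Option.elim]
  ring_nf

theorem abHMM.F_sub_eq_projAction {α : ℝ} {M : ℕ} (hc : 0 ≤ 1 - α * M) (hα : 0 < α) (β : ℝ)
    (d : Fin (M - 1) → ℝ) :
    (fun x m => abHMM.F α M x m - β * d m) =
      projAction (expLift fun m => -(β * d m)) (1 - α * M) α := by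
  ext x m
  rw [projAction, logRatio_mul (expLift_pos _) (mixSum_pos hc hα (expLift_pos x)),
    logRatio_expLift, abHMM.F_eq_logRatio_mixSum, Pi.add_apply]
  ring

theorem abHMM_reference_system_converges_general (M : ℕ) (α β : ℝ)
    (hα : 0 < α) (hα' : α < 1 / M)
    (d : Fin (M - 1) → ℝ) :
    ∃ xinf : Fin (M - 1) → ℝ,
      (xinf = fun m => abHMM.F α M xinf m - β * d m) ∧
      (∀ y : Fin (M - 1) → ℝ, (y = fun m => abHMM.F α M y m - β * d m) → y = xinf) ∧
      (∀ xh : ℕ → Fin (M - 1) → ℝ,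
        (∀ i : ℕ, xh (i + 1) = fun m => abHMM.F α M (xh i) m - β * d m) →
        Filter.Tendsto xh Filter.atTop (nhds xinf)) := by
  have hc : 0 ≤ 1 - α * M := by
    rcases M.eq_zero_or_pos with rfl | hM
    · simp
    · rw [lt_div_iff₀ (by exact_mod_cast hM)] at hα'
      linarith
  set Φ : (Fin (M - 1) → ℝ) → Fin (M - 1) → ℝ := fun x m => abHMM.F α M x m - β * d m with hΦ
  rw [abHMM.F_sub_eq_projAction hc hα β d] at hΦ
  have hg := expLift_pos fun m => -(β * d m)
  obtain ⟨xinf, hfix, hconv⟩ := exists_isFixedPt_tendsto_iterate_of_dist_iterate_le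
    (hΦ ▸ continuous_projAction hg hc hα) (div_nonneg hc (by linarith))
    ((div_lt_one (by linarith)).2 (by linarith))
    (hΦ ▸ exists_dist_iterate_projAction_le hg hc hα)
  refine ⟨xinf, hfix.symm, fun y hy => ?_, fun xh hxh => ?_⟩
  · have hy' := hconv y
    simp only [iterate_fixed (f := Φ) hy.symm] at hy'
    exact tendsto_nhds_unique tendsto_const_nhds hy'
  · have horbit : xh = fun n => Φ^[n] (xh 0) := funext fun n => by
      induction n with
      | zero => rfl
      | succ n ih => rw [hxh n, iterate_succ_apply', ← ih]
    exact horbit ▸ hconv (xh 0)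

/-- Theorem 1, convergence part: for `0 < α < 1/M`, `β > 0` and `d > 0`
componentwise, the map `x ↦ F(x) - β d` has a unique fixed point `x̂^∞`, and every
trajectory of the reference dynamical system `x̂_i = F(x̂_{i-1}) - β d` (with arbitrary
initial value `x̂_0`) converges to `x̂^∞`. -/
theorem abHMM_reference_system_converges (M : ℕ) (hM : 2 ≤ M) (α β : ℝ)
    (hα : 0 < α) (hα' : α < 1 / M) (hβ : 0 < β)
    (d : Fin (M - 1) → ℝ) (hd : ∀ m, 0 < d m) :
    ∃ xinf : Fin (M - 1) → ℝ,
      (xinf = fun m => abHMM.F α M xinf m - β * d m) ∧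
      (∀ y : Fin (M - 1) → ℝ, (y = fun m => abHMM.F α M y m - β * d m) → y = xinf) ∧
      (∀ xh : ℕ → Fin (M - 1) → ℝ,
        (∀ i : ℕ, xh (i + 1) = fun m => abHMM.F α M (xh i) m - β * d m) →
        Filter.Tendsto xh Filter.atTop (nhds xinf)) :=
  abHMM_reference_system_converges_general M α β hα hα' d
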